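/- (An asymptotic optimality condition.) Let f ∈ Γ(X), x* ∈ X* and x̄ ∈ A ∩ dom f. Then x̄ is an optimal solution of the problem (P_{x*}): minimize f(x) − ⟨x*, x⟩ subject to x ∈ C and f_i(x) ≤ 0 for all i ∈ I, if and only if (x*, ⟨x*, x̄⟩ − f(x̄)) ∈ w*-cl(epi f* + K). -/

import Mathlib

open Pointwise

noncomputable section

variable {X : Type*} [AddCommGroup X] [Module ℝ X] [TopologicalSpace X]

/-- Fenchel conjugate, as a function on the weak-* dual. -/
def conjFn (h : X → EReal) : WeakDual ℝ X → EReal :=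
  fun p => ⨆ x : X, (p x : EReal) - h x

/-- Epigraph of an extended-real-valued function. -/
def epiFn {V : Type*} (h : V → EReal) : Set (V × ℝ) :=
  {q | h q.1 ≤ (q.2 : EReal)}

/-- Graph of an extended-real-valued function (where it is finite). -/
def gphFn {V : Type*} (h : V → EReal) : Set (V × ℝ) :=
  {q | h q.1 = (q.2 : EReal)}

/-- Effective domain. -/
def domFn {V : Type*} (h : V → EReal) : Set V :=
  {x | h x < ⊤}

open Classical in
/-- Indicator function of a set. -/
def indicatorE {V : Type*} (D : Set V) : V → EReal :=
  fun x => if x ∈ D then (0 : EReal) else ⊤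

/-- Convex cone generated by `D ∪ {0}`. -/
def coneGen {V : Type*} [AddCommGroup V] [Module ℝ V] (D : Set V) : Set V :=
  {0} ∪ {y | ∃ t : ℝ, 0 ≤ t ∧ ∃ x ∈ convexHull ℝ D, y = t • x}

/-- `h ∈ Γ(X)`: proper, convex and lower semicontinuous. -/
def InGamma (h : X → EReal) : Prop :=
  (∀ x, h x ≠ ⊥) ∧ (∃ x, h x ≠ ⊤) ∧
    Convex ℝ {q : X × ℝ | h q.1 ≤ (q.2 : EReal)} ∧ LowerSemicontinuous h

/-- Solution set `A` of the system `σ = {f i x ≤ 0, i ∈ I; x ∈ C}`. -/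
def solSet {I : Type*} (C : Set X) (f : I → X → EReal) : Set X :=
  {x | x ∈ C ∧ ∀ i, f i x ≤ (0 : EReal)}

/-- Characteristic cone `K = cone (epi δ_C* ∪ ⋃ i, epi f_i*)` of the system. -/
def charCone {I : Type*} (C : Set X) (f : I → X → EReal) : Set (WeakDual ℝ X × ℝ) :=
  coneGen (epiFn (conjFn (indicatorE C)) ∪ ⋃ i, epiFn (conjFn (f i)))

/-- Barrier cone `barr C = dom δ_C*`. -/
def barCone (C : Set X) : Set (WeakDual ℝ X) :=
  domFn (conjFn (indicatorE C))

/-- The Farkas–Minkowski constraint qualification. -/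
def IsFM {I : Type*} (C : Set X) (f : I → X → EReal) : Prop :=
  (solSet C f).Nonempty ∧ IsClosed (charCone C f)

/-- Recession function `h^∞ = δ*_{dom h*}`. -/
def recFn (h : X → EReal) : X → EReal :=
  fun x => ⨆ q ∈ domFn (conjFn h), ((q x : ℝ) : EReal)

/-- Recession cone `D^∞ = ⋂_{t>0} t (D - a)`, for any `a ∈ D`. -/
def recCone (D : Set X) : Set X :=
  {d | ∀ a ∈ D, ∀ t : ℝ, 0 < t → d ∈ t • (D - ({a} : Set X))}

/-- Subdifferential of `h` at `a`. -/
def subdiff (h : X → EReal) (a : X) : Set (WeakDual ℝ X) :=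
  {p | (∃ r : ℝ, h a = (r : EReal)) ∧ ∀ x, h a + ((p (x - a) : ℝ) : EReal) ≤ h x}

/-!
Put `E = epi g* + K` and `c = ⟨p, x̄⟩ - g x̄`. `E` is convex and stable under adding `(0, δ)`,
`δ ≥ 0`, and the continuous functionals on `X* × ℝ` (weak-* topology) are `(w, t) ↦ w x + s t`.
Separating a point from `cl E` by such a functional, and tilting vertical separators by an affine
minorant, shows that `(p, c) ∈ cl E` iff `p x - c ≤ r` for every `(x, r)` with
`w x - t ≤ r` on all of `E`. By Fenchel–Moreau for `g`, `δ_C` and the `f i`, and since `K` is a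
cone, those `(x, r)` are exactly the points with `x ∈ A` and `g x ≤ r`. So `(p, c) ∈ cl E` says
`p x - g x ≤ c` on `A`, which is the optimality of `x̄`.
-/

instance : LocallyConvexSpace ℝ (WeakDual ℝ X) := WeakBilin.locallyConvexSpace

lemma nonpos_of_forall_mul_le {a b : ℝ} (h : ∀ t : ℝ, 0 ≤ t → t * a ≤ b) : a ≤ 0 := by
  by_contra! ha
  have := h ((|b| + 1) / a) (by positivity)
  rw [div_mul_cancel₀ _ ha.ne'] at this
  linarith [le_abs_self b]

section Epigraphical

variable {V : Type*} [AddCommGroup V]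

def IsEpigraphical (E : Set (V × ℝ)) : Prop :=
  ∀ w ∈ E, ∀ δ : ℝ, 0 ≤ δ → w + (0, δ) ∈ E

lemma isEpigraphical_epiFn (h : V → EReal) : IsEpigraphical (epiFn h) := by
  intro w hw δ hδ
  show h (w.1 + 0) ≤ ((w.2 + δ : ℝ) : EReal)
  rw [add_zero, EReal.coe_add]
  exact hw.trans (le_add_of_nonneg_right (EReal.coe_nonneg.2 hδ))

lemma IsEpigraphical.add_right {A : Set (V × ℝ)} (hA : IsEpigraphical A) (B : Set (V × ℝ)) :
    IsEpigraphical (A + B) := by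
  rintro _ ⟨a, ha, b, hb, rfl⟩ δ hδ
  exact ⟨a + (0, δ), hA a ha δ hδ, b, hb, add_right_comm _ _ _⟩

variable [Module ℝ V] [TopologicalSpace V]

lemma ContinuousLinearMap.apply_eq_inl_add_mul (φ : V × ℝ →L[ℝ] ℝ) (z : V × ℝ) :
    φ z = φ.comp (ContinuousLinearMap.inl ℝ V ℝ) z.1 + z.2 * φ (0, 1) := by
  conv_lhs => rw [show z = (z.1, 0) + z.2 • ((0 : V), (1 : ℝ)) by ext <;> simp]
  rw [map_add, map_smul, smul_eq_mul]
  rfl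

variable [IsTopologicalAddGroup V] [ContinuousSMul ℝ V] [LocallyConvexSpace ℝ V]

lemma exists_separation_of_notMem_closure {E : Set (V × ℝ)} (hconv : Convex ℝ E) {z : V × ℝ}
    (hz : z ∉ closure E) :
    ∃ (ℓ : V →L[ℝ] ℝ) (s u : ℝ), (∀ w ∈ E, ℓ w.1 + w.2 * s < u) ∧ u < ℓ z.1 + z.2 * s := by
  obtain ⟨φ, u, hφ, hu⟩ := geometric_hahn_banach_closed_point hconv.closure isClosed_closure hz
  refine ⟨φ.comp (.inl ℝ V ℝ), φ (0, 1), u, fun w hw => ?_, ?_⟩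
  · rw [← φ.apply_eq_inl_add_mul]
    exact hφ w (subset_closure hw)
  · rwa [← φ.apply_eq_inl_add_mul]

lemma IsEpigraphical.exists_separation {E : Set (V × ℝ)} (hE : IsEpigraphical E)
    (hconv : Convex ℝ E) (hne : E.Nonempty) {z : V × ℝ} (hz : z ∉ closure E) :
    ∃ (ℓ : V →L[ℝ] ℝ) (u : ℝ), ((∀ w ∈ E, ℓ w.1 - w.2 < u) ∧ u < ℓ z.1 - z.2) ∨
      ((∀ w ∈ E, ℓ w.1 < u) ∧ u < ℓ z.1) := by
  obtain ⟨ℓ, s, u, hsep, hzsep⟩ := exists_separation_of_notMem_closure hconv hz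
  obtain ⟨w, hw⟩ := hne
  have hs : s ≤ 0 := nonpos_of_forall_mul_le (b := u - ℓ w.1 - w.2 * s) fun δ hδ => by
    have := hsep _ (hE w hw δ hδ)
    simp only [Prod.fst_add, Prod.snd_add, add_zero] at this
    linarith
  rcases hs.lt_or_eq with hs | rfl
  · have hscale : ∀ (a : V) (t : ℝ),
        ((-s)⁻¹ • ℓ) a - t - (-s)⁻¹ * u = (-s)⁻¹ * (ℓ a + t * s - u) := by
      intro a t
      have : s ≠ 0 := hs.ne
      simp only [smul_apply, smul_eq_mul]
      field_simp
      ring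
    have hs' : 0 < (-s)⁻¹ := inv_pos.2 (neg_pos.2 hs)
    refine ⟨(-s)⁻¹ • ℓ, (-s)⁻¹ * u, Or.inl ⟨fun w hw => ?_, ?_⟩⟩
    · have := mul_neg_of_pos_of_neg hs' (sub_neg.2 (hsep w hw))
      linarith [hscale w.1 w.2]
    · have := mul_pos hs' (sub_pos.2 hzsep)
      linarith [hscale z.1 z.2]
  · exact ⟨ℓ, u, Or.inr ⟨fun w hw => by simpa using hsep w hw, by simpa using hzsep⟩⟩

theorem IsEpigraphical.mem_closure_iff {E : Set (V × ℝ)} (hE : IsEpigraphical E)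
    (hconv : Convex ℝ E) (hne : E.Nonempty)
    (hmin : ∃ (ℓ₀ : V →L[ℝ] ℝ) (b₀ : ℝ), ∀ w ∈ E, ℓ₀ w.1 - w.2 ≤ b₀) {z : V × ℝ} :
    z ∈ closure E ↔ ∀ (ℓ : V →L[ℝ] ℝ) (b : ℝ), (∀ w ∈ E, ℓ w.1 - w.2 ≤ b) → ℓ z.1 - z.2 ≤ b := by
  refine ⟨fun hz ℓ b hℓ => ?_, fun h => ?_⟩
  · have hcl : IsClosed {w : V × ℝ | ℓ w.1 - w.2 ≤ b} :=
      isClosed_le (by fun_prop) continuous_const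
    exact closure_minimal hℓ hcl hz
  by_contra hz
  obtain ⟨ℓ, u, ⟨hsep, hzsep⟩ | ⟨hsep, hzsep⟩⟩ := hE.exists_separation hconv hne hz
  · exact (h ℓ u fun w hw => (hsep w hw).le).not_gt hzsep
  · obtain ⟨ℓ₀, b₀, h₀⟩ := hmin
    -- tilting the minorant `ℓ₀` by any multiple of the vertical separator keeps it a minorant
    have : ℓ z.1 - u ≤ 0 := nonpos_of_forall_mul_le (b := b₀ - (ℓ₀ z.1 - z.2)) fun t ht => by
      have := h (ℓ₀ + t • ℓ) (b₀ + t * u) fun w hw => by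
        have := mul_le_mul_of_nonneg_left (hsep w hw).le ht
        simp only [add_apply, smul_apply, smul_eq_mul]
        linarith [h₀ w hw]
      simp only [add_apply, smul_apply, smul_eq_mul] at this
      linarith
    linarith

lemma IsEpigraphical.exists_affine_minorant {E : Set (V × ℝ)} (hE : IsEpigraphical E)
    (hconv : Convex ℝ E) {v : V} {r r' : ℝ} (hr : (v, r) ∉ closure E) (hr' : (v, r') ∈ E) :
    ∃ (ℓ : V →L[ℝ] ℝ) (b : ℝ), ∀ w ∈ E, ℓ w.1 - w.2 ≤ b := by
  obtain ⟨ℓ, u, ⟨hsep, -⟩ | ⟨hsep, hv⟩⟩ := hE.exists_separation hconv ⟨_, hr'⟩ hr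
  · exact ⟨ℓ, u, fun w hw => (hsep w hw).le⟩
  · exact absurd (hsep _ hr') hv.not_gt

end Epigraphical

section Cone

variable {V : Type*} [AddCommGroup V] [Module ℝ V] {D : Set V}

lemma zero_mem_coneGen (D : Set V) : (0 : V) ∈ coneGen D := Or.inl rfl

lemma subset_coneGen (D : Set V) : D ⊆ coneGen D := fun x hx =>
  Or.inr ⟨1, zero_le_one, x, subset_convexHull ℝ D hx, (one_smul ℝ x).symm⟩

lemma coneGen_smul {c : ℝ} (hc : 0 ≤ c) {a : V} (ha : a ∈ coneGen D) : c • a ∈ coneGen D := by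
  rcases ha with rfl | ⟨t, ht, x, hx, rfl⟩
  · rw [smul_zero]
    exact zero_mem_coneGen D
  · exact Or.inr ⟨c * t, mul_nonneg hc ht, x, hx, smul_smul c t x⟩

lemma coneGen_add {a b : V} (ha : a ∈ coneGen D) (hb : b ∈ coneGen D) : a + b ∈ coneGen D := by
  rcases ha with rfl | ⟨t, ht, x, hx, rfl⟩
  · rwa [zero_add]
  rcases hb with rfl | ⟨s, hs, y, hy, rfl⟩
  · rw [add_zero]
    exact Or.inr ⟨t, ht, x, hx, rfl⟩
  rcases (add_nonneg ht hs).eq_or_lt with hts | hts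
  · obtain ⟨rfl, rfl⟩ : t = 0 ∧ s = 0 := by constructor <;> linarith
    rw [zero_smul, zero_smul, add_zero]
    exact zero_mem_coneGen D
  · refine Or.inr ⟨t + s, hts.le, (t / (t + s)) • x + (s / (t + s)) • y,
      convex_convexHull ℝ D hx hy (by positivity) (by positivity) (by field_simp), ?_⟩
    rw [smul_add, smul_smul, smul_smul, mul_div_cancel₀ _ hts.ne', mul_div_cancel₀ _ hts.ne']

lemma convex_coneGen (D : Set V) : Convex ℝ (coneGen D) :=
  fun _ hx _ hy _ _ ha hb _ => coneGen_add (coneGen_smul ha hx) (coneGen_smul hb hy)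

lemma map_nonpos_of_mem_coneGen (L : V →ₗ[ℝ] ℝ) (hD : ∀ d ∈ D, L d ≤ 0) {k : V}
    (hk : k ∈ coneGen D) : L k ≤ 0 := by
  rcases hk with rfl | ⟨t, ht, y, hy, rfl⟩
  · rw [map_zero]
  · rw [map_smul, smul_eq_mul]
    exact mul_nonpos_of_nonneg_of_nonpos ht
      (convexHull_min hD (convex_halfSpace_le L.isLinear 0) hy)

end Cone

lemma EReal.coe_sub_le_coe_iff_forall {a t : ℝ} {b : EReal} :
    (a : EReal) - b ≤ t ↔ ∀ r : ℝ, b ≤ r → a - r ≤ t := by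
  induction b with
  | bot => simpa using ⟨a - t - 1, by linarith⟩
  | coe b =>
    norm_cast
    exact ⟨fun h r hr => by linarith, fun h => h b le_rfl⟩
  | top => simp

lemma EReal.coe_sub_coe_le_sub_coe_iff {a α β : ℝ} {b : EReal} (hb : b ≠ ⊥) :
    (a : EReal) - α ≤ b - β ↔ ∀ r : ℝ, b ≤ r → β - (α - a) ≤ r := by
  induction b with
  | bot => exact absurd rfl hb
  | coe b =>
    norm_cast
    exact ⟨fun h r hr => by linarith, fun h => by linarith [h b le_rfl]⟩
  | top => simp

/-- A point `w = (w₁, w₂)` of `X* × ℝ` encodes the affine function `y ↦ w₁ y - w₂`;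
`affineEval x` evaluates it at `x`. -/
def affineEval (x : X) : WeakDual ℝ X × ℝ →ₗ[ℝ] ℝ :=
  (WeakBilin.eval (topDualPairing ℝ X) x).toLinearMap ∘ₗ LinearMap.fst ℝ _ ℝ -
    LinearMap.snd ℝ _ ℝ

@[simp]
lemma affineEval_apply (x : X) (w : WeakDual ℝ X × ℝ) : affineEval x w = w.1 x - w.2 := rfl

lemma mem_epiFn_conjFn {h : X → EReal} {w : WeakDual ℝ X × ℝ} :
    w ∈ epiFn (conjFn h) ↔ ∀ q ∈ epiFn h, w.1 q.1 - q.2 ≤ w.2 := by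
  simp only [epiFn, conjFn, Set.mem_ofPred_eq, iSup_le_iff, EReal.coe_sub_le_coe_iff_forall,
    Prod.forall]

lemma convex_epiFn_conjFn (h : X → EReal) : Convex ℝ (epiFn (conjFn h)) := by
  have : epiFn (conjFn h) = ⋂ q ∈ epiFn h, {w | affineEval q.1 w ≤ q.2} := by
    ext w
    simp only [mem_epiFn_conjFn, Set.mem_iInter, affineEval_apply, Set.mem_ofPred_eq, sub_le_comm]
  rw [this]
  exact convex_iInter₂ fun q _ => convex_halfSpace_le (affineEval q.1).isLinear _

lemma InGamma.isClosed_epiFn {h : X → EReal} (hh : InGamma h) : IsClosed (epiFn h) :=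
  hh.2.2.2.isClosed_epigraph.preimage
    (continuous_fst.prodMk (continuous_coe_real_ereal.comp continuous_snd))

lemma InGamma.exists_eq_coe {h : X → EReal} (hh : InGamma h) : ∃ (y : X) (r : ℝ), h y = r := by
  obtain ⟨y, hy⟩ := hh.2.1
  exact ⟨y, (h y).toReal, (EReal.coe_toReal hy (hh.1 y)).symm⟩

section FenchelMoreau

variable [IsTopologicalAddGroup X] [ContinuousSMul ℝ X] [LocallyConvexSpace ℝ X]

lemma InGamma.nonempty_epiFn_conjFn {h : X → EReal} (hh : InGamma h) :
    (epiFn (conjFn h)).Nonempty := by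
  obtain ⟨y, r, hyr⟩ := hh.exists_eq_coe
  have hbelow : (y, r - 1) ∉ closure (epiFn h) := by
    rw [hh.isClosed_epiFn.closure_eq]
    show ¬h y ≤ ((r - 1 : ℝ) : EReal)
    rw [hyr, EReal.coe_le_coe_iff]
    linarith
  obtain ⟨ℓ, b, hℓ⟩ := (isEpigraphical_epiFn h).exists_affine_minorant (E := epiFn h) hh.2.2.1
    hbelow hyr.le
  exact ⟨(StrongDual.toWeakDual ℓ, b), mem_epiFn_conjFn.2 hℓ⟩

theorem InGamma.le_coe_iff {h : X → EReal} (hh : InGamma h) {x : X} {r : ℝ} :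
    h x ≤ r ↔ ∀ w ∈ epiFn (conjFn h), w.1 x - r ≤ w.2 := by
  obtain ⟨y, s, hys⟩ := hh.exists_eq_coe
  obtain ⟨w₀, hw₀⟩ := hh.nonempty_epiFn_conjFn
  change (x, r) ∈ epiFn h ↔ _
  rw [← hh.isClosed_epiFn.closure_eq, (isEpigraphical_epiFn h).mem_closure_iff (E := epiFn h)
    hh.2.2.1 ⟨(y, s), hys.le⟩ ⟨w₀.1.toStrongDual, w₀.2, mem_epiFn_conjFn.1 hw₀⟩]
  exact ⟨fun H w hw => H w.1.toStrongDual w.2 (mem_epiFn_conjFn.1 hw),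
    fun H ℓ b hℓ => H (StrongDual.toWeakDual ℓ, b) (mem_epiFn_conjFn.2 hℓ)⟩

end FenchelMoreau

lemma WeakDual.exists_eq_apply (ψ : WeakDual ℝ X →L[ℝ] ℝ) :
    ∃ x : X, ∀ q : WeakDual ℝ X, ψ q = q x := by
  obtain ⟨x, hx⟩ := LinearMap.dualEmbedding_surjective (topDualPairing ℝ X) ψ
  exact ⟨x, fun q => by rw [← hx]; rfl⟩

theorem IsEpigraphical.mem_closure_iff_forall_apply {E : Set (WeakDual ℝ X × ℝ)}
    (hE : IsEpigraphical E) (hconv : Convex ℝ E) (hne : E.Nonempty)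
    (hmin : ∃ (x₀ : X) (r₀ : ℝ), ∀ w ∈ E, w.1 x₀ - w.2 ≤ r₀) {z : WeakDual ℝ X × ℝ} :
    z ∈ closure E ↔ ∀ (x : X) (r : ℝ), (∀ w ∈ E, w.1 x - w.2 ≤ r) → z.1 x - z.2 ≤ r := by
  obtain ⟨x₀, r₀, h₀⟩ := hmin
  have hmin' : ∃ (ℓ₀ : WeakDual ℝ X →L[ℝ] ℝ) (b₀ : ℝ), ∀ w ∈ E, ℓ₀ w.1 - w.2 ≤ b₀ :=
    ⟨WeakBilin.eval (topDualPairing ℝ X) x₀, r₀, h₀⟩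
  rw [hE.mem_closure_iff hconv hne hmin']
  refine ⟨fun H x => H (WeakBilin.eval (topDualPairing ℝ X) x), fun H ψ b hψ => ?_⟩
  obtain ⟨x, hx⟩ := WeakDual.exists_eq_apply ψ
  simp only [hx] at hψ ⊢
  exact H x b hψ

lemma indicatorE_le_coe_iff {V : Type*} {D : Set V} {x : V} {r : ℝ} :
    indicatorE D x ≤ r ↔ x ∈ D ∧ 0 ≤ r := by
  classical
  unfold indicatorE
  split_ifs with hx <;> simp [hx]

section System

variable {I : Type*} {C : Set X} {f : I → X → EReal}

lemma charCone_apply_le {x : X} (hx : x ∈ solSet C f) {k : WeakDual ℝ X × ℝ}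
    (hk : k ∈ charCone C f) : k.1 x ≤ k.2 := by
  refine sub_nonpos.1 (map_nonpos_of_mem_coneGen (affineEval x) ?_ hk)
  rintro w (hw | hw)
  · simpa using mem_epiFn_conjFn.1 hw (x, 0) (indicatorE_le_coe_iff.2 ⟨hx.1, le_rfl⟩)
  · obtain ⟨i, hw⟩ := Set.mem_iUnion.1 hw
    simpa using mem_epiFn_conjFn.1 hw (x, 0) (by simpa [epiFn] using hx.2 i)

variable [IsTopologicalAddGroup X] [ContinuousSMul ℝ X] [LocallyConvexSpace ℝ X]

lemma mem_of_forall_mem_epiFn_conjFn_indicatorE (hC : IsClosed C) (hCcv : Convex ℝ C) {x : X}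
    (h : ∀ w ∈ epiFn (conjFn (indicatorE C)), w.1 x ≤ w.2) : x ∈ C := by
  by_contra hx
  obtain ⟨ℓ, u, hℓ, hu⟩ := geometric_hahn_banach_closed_point hCcv hC hx
  refine (h (StrongDual.toWeakDual ℓ, u) (mem_epiFn_conjFn.2 fun q hq => ?_)).not_gt hu
  obtain ⟨hq, hq0⟩ := indicatorE_le_coe_iff.1 hq
  have := hℓ _ hq
  show ℓ q.1 - q.2 ≤ u
  linarith

lemma mem_solSet_iff_forall_charCone (hC : IsClosed C) (hCcv : Convex ℝ C)
    (hf : ∀ i, InGamma (f i)) {x : X} : x ∈ solSet C f ↔ ∀ k ∈ charCone C f, k.1 x ≤ k.2 := by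
  refine ⟨fun hx k hk => charCone_apply_le hx hk, fun h => ⟨?_, fun i => ?_⟩⟩
  · exact mem_of_forall_mem_epiFn_conjFn_indicatorE hC hCcv fun w hw =>
      h w (subset_coneGen _ (Or.inl hw))
  · have := ((hf i).le_coe_iff (x := x) (r := 0)).2 fun w hw => by
      simpa using h w (subset_coneGen _ (Or.inr (Set.mem_iUnion.2 ⟨i, hw⟩)))
    exact_mod_cast this

theorem forall_mem_epiFn_conjFn_add_charCone_iff (hC : IsClosed C) (hCcv : Convex ℝ C)
    (hf : ∀ i, InGamma (f i)) {g : X → EReal} (hg : InGamma g) {x : X} {r : ℝ} :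
    (∀ w ∈ epiFn (conjFn g) + charCone C f, w.1 x - w.2 ≤ r) ↔ x ∈ solSet C f ∧ g x ≤ r := by
  constructor
  · intro h
    obtain ⟨w₀, hw₀⟩ := hg.nonempty_epiFn_conjFn
    refine ⟨(mem_solSet_iff_forall_charCone hC hCcv hf).2 fun k hk => ?_,
      hg.le_coe_iff.2 fun w hw => ?_⟩
    · -- `w₀` moved along the ray through `k` stays in the sum
      have : affineEval x k ≤ 0 := nonpos_of_forall_mul_le (b := r - affineEval x w₀)
        fun t ht => by
          have := h _ (Set.add_mem_add hw₀ (coneGen_smul ht hk))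
          rw [← affineEval_apply, map_add, map_smul, smul_eq_mul] at this
          linarith
      simpa using this
    · have := h (w + 0) (Set.add_mem_add hw (zero_mem_coneGen _))
      rw [add_zero] at this
      linarith
  · rintro ⟨hx, hgx⟩ _ ⟨w, hw, k, hk, rfl⟩
    have h₁ := mem_epiFn_conjFn.1 hw (x, r) hgx
    have h₂ := charCone_apply_le hx hk
    rw [← affineEval_apply, map_add, affineEval_apply, affineEval_apply]
    linarith

end System

theorem stmt18_general [IsTopologicalAddGroup X] [ContinuousSMul ℝ X] [LocallyConvexSpace ℝ X] {I : Type*} (C : Set X) (hCcl : IsClosed C) (hCcv : Convex ℝ C)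
    (f : I → X → EReal) (hf : ∀ i, InGamma (f i))
    (g : X → EReal) (hg : InGamma g)
    (p : WeakDual ℝ X) (xb : X) (hxb : xb ∈ solSet C f ∩ domFn g) :
    (∀ x ∈ solSet C f,
        g xb - ((p xb : ℝ) : EReal) ≤ g x - ((p x : ℝ) : EReal)) ↔
      (p, p xb - (g xb).toReal) ∈ closure (epiFn (conjFn g) + charCone C f) := by
  obtain ⟨hxbA, hxbdom⟩ := hxb
  have hgxb : g xb = (g xb).toReal := (EReal.coe_toReal hxbdom.ne (hg.1 xb)).symm
  have hchar (x : X) (r : ℝ) := forall_mem_epiFn_conjFn_add_charCone_iff (x := x) (r := r)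
    hCcl hCcv hf hg
  rw [((isEpigraphical_epiFn _).add_right (charCone C f)).mem_closure_iff_forall_apply
    ((convex_epiFn_conjFn g).add (convex_coneGen _))
    (hg.nonempty_epiFn_conjFn.add ⟨0, zero_mem_coneGen _⟩)
    ⟨xb, _, (hchar xb _).2 ⟨hxbA, hgxb.le⟩⟩]
  simp only [hchar, and_imp]
  rw [hgxb]
  exact ⟨fun h x r hx => (EReal.coe_sub_coe_le_sub_coe_iff (hg.1 x)).1 (h x hx) r,
    fun h x hx => (EReal.coe_sub_coe_le_sub_coe_iff (hg.1 x)).2 (h x · hx)⟩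

/-- Proposition 2 (An asymptotic optimality condition). -/
theorem stmt18 [IsTopologicalAddGroup X] [ContinuousSMul ℝ X] [LocallyConvexSpace ℝ X] [T2Space X] {I : Type*} (C : Set X) (hCne : C.Nonempty) (hCcl : IsClosed C) (hCcv : Convex ℝ C)
    (f : I → X → EReal) (hf : ∀ i, InGamma (f i))
    (g : X → EReal) (hg : InGamma g)
    (p : WeakDual ℝ X) (xb : X) (hxb : xb ∈ solSet C f ∩ domFn g) :
    (∀ x ∈ solSet C f,
        g xb - ((p xb : ℝ) : EReal) ≤ g x - ((p x : ℝ) : EReal)) ↔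
      (p, p xb - (g xb).toReal) ∈ closure (epiFn (conjFn g) + charCone C f) :=
  stmt18_general C hCcl hCcv f hf g hg p xb hxb
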